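/- arXiv:1412.3227 — 7 statements merged into one kernel-verified Lean document; each statement's English description precedes it below -/
import Mathlib

section
/- Let X be a normed space over ℂ (or ℝ), let V be a Chebyshev subspace of X, and for each x ∈ X let c_V(x) denote the unique best approximation of x in V. Let P : X → X be a linear projection (P ∘ P = P) with ‖P‖ ≤ 1 and P(V) ⊆ V. Then for every x ∈ X, the best approximation of P(x) in V is fixed by P, i.e., P(c_V(P x)) = c_V(P x). -/
/-! Since `P` fixes `y = P x`, it sends the best approximation `v` of `y` to `P v ∈ V` with
`‖y - P v‖ = ‖P (y - v)‖ ≤ ‖y - v‖`; so `P v` is a best approximation too, and uniqueness gives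
`P v = v`. -/

section BestApprox

variable {X : Type*} [NormedAddCommGroup X]

def IsBestApprox (s : Set X) (x v : X) : Prop :=
  v ∈ s ∧ ∀ w ∈ s, ‖x - v‖ ≤ ‖x - w‖

theorem IsBestApprox.map_contraction {s : Set X} {x v : X} (hv : IsBestApprox s x v)
    (P : X →+ X) (hcontr : ∀ z, ‖P z‖ ≤ ‖z‖) (hPs : ∀ w ∈ s, P w ∈ s) (hPx : P x = x) :
    IsBestApprox s x (P v) := by
  have hle : ‖x - P v‖ ≤ ‖x - v‖ :=
    calc ‖x - P v‖ = ‖P (x - v)‖ := by rw [map_sub, hPx]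
      _ ≤ ‖x - v‖ := hcontr _
  exact ⟨hPs v hv.1, fun w hw => hle.trans (hv.2 w hw)⟩

end BestApprox

/-- If `V` is a Chebyshev subspace of a complex normed space `X` with best-approximation
map `cV`, and `P : X → X` is a contractive linear projection with `P(V) ⊆ V`, then
`P (cV (P x)) = cV (P x)` for every `x`. -/
theorem fixed_best_approx_of_contractive_projection
    {X : Type*} [NormedAddCommGroup X] [NormedSpace ℂ X]
    (V : Submodule ℂ X)
    (hcheb : ∀ x : X, ∃! v : X, v ∈ V ∧ ∀ w ∈ V, ‖x - v‖ ≤ ‖x - w‖)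
    (cV : X → X)
    (hcV : ∀ x : X, cV x ∈ V ∧ ∀ w ∈ V, ‖x - cV x‖ ≤ ‖x - w‖)
    (P : X →ₗ[ℂ] X)
    (hproj : ∀ x : X, P (P x) = P x)
    (hcontr : ∀ x : X, ‖P x‖ ≤ ‖x‖)
    (hPV : ∀ v ∈ V, P v ∈ V) :
    ∀ x : X, P (cV (P x)) = cV (P x) := by
  intro x
  have hbest : IsBestApprox V (P x) (cV (P x)) := hcV (P x)
  have hPbest : IsBestApprox V (P x) (P (cV (P x))) :=
    hbest.map_contraction P.toAddMonoidHom hcontr hPV (hproj x)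
  exact (hcheb (P x)).unique hPbest hbest
end

section
/- Let X be a complex normed space and let x ∈ X be an element such that the one-dimensional subspace ℂx is not a Chebyshev subspace of X. Then there exist an extreme point φ of the closed unit ball of the continuous dual space X*, a vector y ∈ X, and a scalar λ ∈ ℂ \ {0} such that φ(x) = 0 and φ(y) = ‖y‖ = ‖y − λx‖. -/
/-!
Since `ℂx` is finite-dimensional, every `z` has a best approximation in it; if `ℂx` is not
Chebyshev, some `z` has two, `v₁ ≠ v₂`. By convexity the midpoint of `y = z - v₁` and
`u = z - v₂` has the same norm `d` as `y` and `u`. By Krein–Milman there is an extreme point `φ`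
of the dual unit ball norming this midpoint; as `d` is an extreme point of the disc of radius `d`
in `ℂ`, `φ y = φ u = d`, so `φ` kills `v₂ - v₁`, a nonzero multiple of `x`.
-/
open Metric Set Filter

theorem Submodule.exists_forall_norm_sub_le {𝕜 E : Type*} [NontriviallyNormedField 𝕜]
    [LocallyCompactSpace 𝕜] [NormedAddCommGroup E] [NormedSpace 𝕜 E]
    (K : Submodule 𝕜 E) [FiniteDimensional 𝕜 K] (z : E) :
    ∃ v ∈ K, ∀ w ∈ K, ‖z - v‖ ≤ ‖z - w‖ := by
  have : ProperSpace K := FiniteDimensional.proper 𝕜 K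
  have hcoercive : Tendsto (fun v : K => ‖z - v‖) (cocompact K) atTop :=
    tendsto_atTop_mono
      (fun v => by rw [← sub_eq_add_neg, norm_sub_rev]; exact norm_sub_norm_le (v : E) z)
      (tendsto_atTop_add_const_right _ (-‖z‖) tendsto_norm_cocompact_atTop)
  obtain ⟨v, hv⟩ := (by fun_prop : Continuous fun v : K => ‖z - v‖).exists_forall_le hcoercive
  exact ⟨v, v.2, fun w hw => hv ⟨w, hw⟩⟩

theorem Convex.norm_midpoint_sub_eq_of_forall_norm_sub_le {E : Type*} [NormedAddCommGroup E]
    [NormedSpace ℝ E] {s : Set E} (hs : Convex ℝ s) {z v₁ v₂ : E} (hv₁ : v₁ ∈ s) (hv₂ : v₂ ∈ s)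
    (hmin : ∀ w ∈ s, ‖z - v₁‖ ≤ ‖z - w‖) (h₂ : ‖z - v₂‖ = ‖z - v₁‖) :
    ‖midpoint ℝ (z - v₁) (z - v₂)‖ = ‖z - v₁‖ := by
  have hmid : midpoint ℝ (z - v₁) (z - v₂) = z - midpoint ℝ v₁ v₂ := by
    simp only [midpoint_eq_smul_add, invOf_eq_inv]; module
  refine le_antisymm ?_ (hmid ▸ hmin _ (hs.midpoint_mem hv₁ hv₂))
  calc ‖midpoint ℝ (z - v₁) (z - v₂)‖ = ‖(2⁻¹ : ℝ) • ((z - v₁) + (z - v₂))‖ := by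
        rw [midpoint_eq_smul_add, invOf_eq_inv]
    _ ≤ 2⁻¹ * (‖z - v₁‖ + ‖z - v₂‖) := by
        rw [norm_smul, Real.norm_of_nonneg (by norm_num)]
        gcongr
        exact norm_add_le _ _
    _ = ‖z - v₁‖ := by rw [h₂]; ring

section Dual

variable {𝕜 X : Type*} [RCLike 𝕜] [NormedAddCommGroup X] [NormedSpace 𝕜 X]

theorem exists_mem_extremePoints_closedBall_apply_eq_norm (y : X) :
    ∃ φ ∈ extremePoints ℝ (closedBall (0 : StrongDual 𝕜 X) 1), φ y = ‖y‖ := by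
  -- not found by instance search, which does not unfold `WeakDual` to `WeakBilin`
  have : LocallyConvexSpace ℝ (WeakDual 𝕜 X) := WeakBilin.locallyConvexSpace
  let ball := WeakDual.toStrongDual ⁻¹' closedBall (0 : StrongDual 𝕜 X) 1
  let eval : WeakDual 𝕜 X →L[ℝ] 𝕜 :=
    { toFun := fun φ => φ y
      map_add' := fun _ _ => rfl
      map_smul' := fun _ _ => rfl
      cont := WeakDual.eval_continuous y }
  have himage : eval '' ball ⊆ closedBall 0 ‖y‖ := by
    rintro _ ⟨φ, hφ, rfl⟩
    rw [mem_closedBall_zero_iff]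
    show ‖φ y‖ ≤ ‖y‖
    simpa using (WeakDual.toStrongDual φ).le_of_opNorm_le (mem_closedBall_zero_iff.1 hφ) y
  obtain ⟨ψ, hψ, hψy⟩ := exists_dual_vector'' 𝕜 y
  have hext : (‖y‖ : 𝕜) ∈ extremePoints ℝ (eval '' ball) := by
    refine inter_extremePoints_subset_extremePoints_of_subset himage
      ⟨⟨ψ, mem_closedBall_zero_iff.2 hψ, hψy⟩, ?_⟩
    rw [StrictConvexSpace.extremePoints_closedBall_eq_sphere]; simp
  -- extreme points of the image of a compact set lift to extreme points of the set
  obtain ⟨φ, hφ, hφy⟩ := surjOn_extremePoints_image eval.toContinuousAffineMap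
    (WeakDual.isCompact_closedBall 0 1) hext
  exact ⟨φ, hφ, hφy⟩

theorem apply_eq_norm_of_apply_midpoint_eq_norm [NormedSpace ℝ X] [IsScalarTower ℝ 𝕜 X]
    {φ : StrongDual 𝕜 X} (hφ : ‖φ‖ ≤ 1) {y u : X} (hu : ‖u‖ = ‖y‖)
    (hφm : φ (midpoint ℝ y u) = ‖y‖) : φ y = ‖y‖ ∧ φ u = ‖y‖ := by
  have hext : (‖y‖ : 𝕜) ∈ extremePoints ℝ (closedBall (0 : 𝕜) ‖y‖) := by
    rw [StrictConvexSpace.extremePoints_closedBall_eq_sphere]; simp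
  have hmaps : ∀ v : X, ‖v‖ = ‖y‖ → φ v ∈ closedBall (0 : 𝕜) ‖y‖ := fun v hv => by
    simpa [hv] using φ.le_of_opNorm_le hφ v
  have hmid : φ (midpoint ℝ y u) = midpoint ℝ (φ y) (φ u) :=
    ((φ.restrictScalars ℝ : X →L[ℝ] 𝕜) : X →ₗ[ℝ] 𝕜).toAffineMap.map_midpoint y u
  refine (mem_extremePoints.1 hext).2 _ (hmaps y rfl) _ (hmaps u hu) ?_
  rw [← hφm, hmid]
  exact midpoint_mem_openSegment _ _

end Dual

/-- If `ℂx` is not a Chebyshev subspace of a complex normed space `X`, then there are an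
extreme point `φ` of the closed unit ball of the dual `X*`, a vector `y` and a nonzero
scalar `λ` with `φ x = 0` and `φ y = ‖y‖ = ‖y - λ x‖`. -/
theorem exists_extreme_functional_of_not_Chebyshev
    {X : Type*} [NormedAddCommGroup X] [NormedSpace ℂ X] (x : X)
    (hx : ¬ (∀ z : X, ∃! v : X, v ∈ Submodule.span ℂ ({x} : Set X) ∧
      ∀ w ∈ Submodule.span ℂ ({x} : Set X), ‖z - v‖ ≤ ‖z - w‖)) :
    ∃ (φ : StrongDual ℂ X) (y : X) (lam : ℂ),
      φ ∈ Set.extremePoints ℝ (Metric.closedBall (0 : StrongDual ℂ X) 1) ∧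
      lam ≠ 0 ∧ φ x = 0 ∧ φ y = (‖y‖ : ℂ) ∧ ‖y‖ = ‖y - lam • x‖ := by
  set K := Submodule.span ℂ ({x} : Set X)
  obtain ⟨z, hz⟩ := not_forall.1 hx
  obtain ⟨v₁, hv₁, hmin₁⟩ := K.exists_forall_norm_sub_le z
  obtain ⟨v₂, ⟨hv₂, hmin₂⟩, hne⟩ : ∃ v₂, (v₂ ∈ K ∧ ∀ w ∈ K, ‖z - v₂‖ ≤ ‖z - w‖) ∧ v₂ ≠ v₁ := by
    by_contra! h
    exact hz ⟨v₁, ⟨hv₁, hmin₁⟩, h⟩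
  obtain ⟨c, hc⟩ := Submodule.mem_span_singleton.1 (K.sub_mem hv₂ hv₁)
  have hu : ‖z - v₂‖ = ‖z - v₁‖ := le_antisymm (hmin₂ v₁ hv₁) (hmin₁ v₂ hv₂)
  have hm := (K.restrictScalars ℝ).convex.norm_midpoint_sub_eq_of_forall_norm_sub_le
    hv₁ hv₂ hmin₁ hu
  obtain ⟨φ, hφ, hφm⟩ := exists_mem_extremePoints_closedBall_apply_eq_norm
    (𝕜 := ℂ) (midpoint ℝ (z - v₁) (z - v₂))
  obtain ⟨hφy, hφu⟩ := apply_eq_norm_of_apply_midpoint_eq_norm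
    (mem_closedBall_zero_iff.1 hφ.1) hu (hm ▸ hφm)
  have hc0 : c ≠ 0 := by
    rintro rfl
    exact hne (sub_eq_zero.1 (by rw [← hc, zero_smul]))
  have hφcx : φ (c • x) = 0 := by
    rw [hc, ← sub_sub_sub_cancel_left v₁ v₂ z, map_sub, hφy, hφu, sub_self]
  have hyu : z - v₂ = (z - v₁) - c • x := by rw [hc]; abel
  exact ⟨φ, z - v₁, c, hφ, hc0, by simpa [hc0] using hφcx, hφy, by rw [← hyu, hu]⟩
end

section
/- (Minimum covering sphere) Let E be a complex Hilbert space and let S be a non-empty finite subset of E. Then there exists a unique point c ∈ E minimizing the maximum distance to S, i.e., a unique c ∈ E such that max_{p ∈ S} ‖p − c‖ ≤ max_{p ∈ S} ‖p − y‖ for every y ∈ E. -/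
/-!
The maximal distance to `S` is continuous, so it attains its minimum `c` on the compact convex
hull `K` of `S`. The metric projection onto `K` brings a point closer to every point of `K`, hence
to every point of `S`, so `c` is a global minimiser. Uniqueness comes from strict convexity of the
norm: if `b ≠ c` both have all of `S` within distance `r`, then every point of `S` is at distance
`< r` from the midpoint of `b` and `c`.
-/

open Finset Metric

section StrictConvex

variable {E : Type*} [NormedAddCommGroup E] [NormedSpace ℝ E] [StrictConvexSpace ℝ E]

theorem sup'_norm_sub_midpoint_lt {S : Finset E} (hS : S.Nonempty) {b c : E} {r : ℝ}
    (hbc : b ≠ c) (hb : S.sup' hS (fun p => ‖p - b‖) ≤ r)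
    (hc : S.sup' hS (fun p => ‖p - c‖) ≤ r) :
    S.sup' hS (fun p => ‖p - ((1 / 2 : ℝ) • b + (1 / 2 : ℝ) • c)‖) < r := by
  rw [Finset.sup'_lt_iff]
  intro p hp
  have hb_mem : b ∈ closedBall p r := by
    rw [mem_closedBall, dist_comm, dist_eq_norm]
    exact (Finset.sup'_le_iff hS _).1 hb p hp
  have hc_mem : c ∈ closedBall p r := by
    rw [mem_closedBall, dist_comm, dist_eq_norm]
    exact (Finset.sup'_le_iff hS _).1 hc p hp
  have hmid := combo_mem_ball_of_ne hb_mem hc_mem hbc one_half_pos one_half_pos (add_halves 1)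
  rwa [mem_ball, dist_comm, dist_eq_norm] at hmid

theorem eq_of_forall_sup'_norm_sub_le {S : Finset E} (hS : S.Nonempty) {b c : E}
    (hb : ∀ y, S.sup' hS (fun p => ‖p - b‖) ≤ S.sup' hS (fun p => ‖p - y‖))
    (hc : ∀ y, S.sup' hS (fun p => ‖p - c‖) ≤ S.sup' hS (fun p => ‖p - y‖)) :
    b = c := by
  by_contra hbc
  exact (hb _).not_gt (sup'_norm_sub_midpoint_lt hS hbc le_rfl (hc b))

end StrictConvex

section InnerProduct

variable {F : Type*} [NormedAddCommGroup F] [InnerProductSpace ℝ F]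

theorem exists_mem_forall_norm_sub_le_of_isComplete_convex {K : Set F} (hne : K.Nonempty)
    (hK : IsComplete K) (hconv : Convex ℝ K) (y : F) :
    ∃ v ∈ K, ∀ p ∈ K, ‖p - v‖ ≤ ‖p - y‖ := by
  obtain ⟨v, hvK, hv⟩ := exists_norm_eq_iInf_of_complete_convex hne hK hconv y
  refine ⟨v, hvK, fun p hp => ?_⟩
  have hinner : inner ℝ (p - v) (y - v) ≤ 0 := by
    rw [real_inner_comm]
    exact (norm_eq_iInf_iff_real_inner_le_zero hconv hvK).1 hv p hp
  have hsq : ‖p - v‖ ^ 2 ≤ ‖p - y‖ ^ 2 := by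
    calc ‖p - v‖ ^ 2
        ≤ ‖p - v‖ ^ 2 - 2 * inner ℝ (p - v) (y - v) + ‖y - v‖ ^ 2 := by
          linarith [sq_nonneg ‖y - v‖]
      _ = ‖(p - v) - (y - v)‖ ^ 2 := (norm_sub_sq_real _ _).symm
      _ = ‖p - y‖ ^ 2 := by rw [sub_sub_sub_cancel_right]
  exact (pow_le_pow_iff_left₀ (norm_nonneg _) (norm_nonneg _) two_ne_zero).1 hsq

theorem exists_forall_sup'_norm_sub_le {S : Finset F} (hS : S.Nonempty) :
    ∃ c : F, ∀ y, S.sup' hS (fun p => ‖p - c‖) ≤ S.sup' hS (fun p => ‖p - y‖) := by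
  let K := convexHull ℝ (S : Set F)
  have hSK : (S : Set F) ⊆ K := subset_convexHull ℝ _
  have hK : IsCompact K := S.finite_toSet.isCompact_convexHull ℝ
  have hcont : Continuous fun y => S.sup' hS (fun p => ‖p - y‖) :=
    Continuous.finset_sup'_apply hS fun p _ => (continuous_const.sub continuous_id).norm
  obtain ⟨c, hcK, hcmin⟩ :=
    hK.exists_isMinOn (hS.to_set.mono hSK) hcont.continuousOn
  refine ⟨c, fun y => ?_⟩
  obtain ⟨v, hvK, hv⟩ := exists_mem_forall_norm_sub_le_of_isComplete_convex
    (hS.to_set.mono hSK) hK.isComplete (convex_convexHull ℝ _) y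
  calc S.sup' hS (fun p => ‖p - c‖)
      ≤ S.sup' hS (fun p => ‖p - v‖) := hcmin hvK
    _ ≤ S.sup' hS (fun p => ‖p - y‖) :=
      Finset.sup'_mono_fun fun p hp => hv p (hSK hp)

end InnerProduct

theorem minimum_covering_sphere_general
    {E : Type*} [NormedAddCommGroup E] [InnerProductSpace ℂ E]
    (S : Finset E) (hS : S.Nonempty) :
    ∃! c : E, ∀ y : E,
      S.sup' hS (fun p => ‖p - c‖) ≤ S.sup' hS (fun p => ‖p - y‖) := by
  let : InnerProductSpace ℝ E := InnerProductSpace.rclikeToReal ℂ E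
  obtain ⟨c, hc⟩ := exists_forall_sup'_norm_sub_le hS
  exact ⟨c, hc, fun b hb => eq_of_forall_sup'_norm_sub_le hS hb hc⟩

/-- (Minimum covering sphere) For every non-empty finite subset `S` of a complex Hilbert
space `E`, there is a unique point `c` minimizing the maximum distance to `S`. -/
theorem minimum_covering_sphere
    {E : Type*} [NormedAddCommGroup E] [InnerProductSpace ℂ E] [CompleteSpace E]
    (S : Finset E) (hS : S.Nonempty) :
    ∃! c : E, ∀ y : E,
      S.sup' hS (fun p => ‖p - c‖) ≤ S.sup' hS (fun p => ‖p - y‖) :=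
  minimum_covering_sphere_general S hS
end

section
/- Let E be a complex inner product space and let J : E → E be a conjugation, i.e., a conjugate-linear map satisfying J(J(x)) = x and ⟨Jx, Jy⟩ = ⟨y, x⟩ for all x, y ∈ E. Define the spin norm of x ∈ E by N(x) = (‖x‖² + √(‖x‖⁴ − |⟨x, Jx⟩|²))^{1/2}. If η, ξ ∈ E satisfy ⟨η, ξ⟩ = 0 and ⟨η, Jξ⟩ = 0, then N(η + ξ) ≥ N(η), and N(η + ξ) = N(η) if and only if ξ = 0. -/
/-!
Orthogonality of `ξ` to both `η` and `Jη` makes both ingredients of the spin norm split: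
`‖η + ξ‖² = ‖η‖² + ‖ξ‖²` and `⟪η + ξ, J(η + ξ)⟫ = ⟪η, Jη⟫ + ⟪ξ, Jξ⟫`. Since
`|⟪x, Jx⟫| ≤ ‖x‖²`, the inner square root can only grow, so
`N(η)² + ‖ξ‖² ≤ N(η + ξ)²`, which gives both the inequality and the equality case.
-/

open scoped ComplexInnerProductSpace

theorem sq_sub_sq_le_add_sq_sub_sq {A B P Q C : ℝ} (hP : 0 ≤ P) (hPA : P ≤ A) (hQ : 0 ≤ Q)
    (hQB : Q ≤ B) (hC : 0 ≤ C) (hCPQ : C ≤ P + Q) :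
    A ^ 2 - P ^ 2 ≤ (A + B) ^ 2 - C ^ 2 := by
  nlinarith [mul_le_mul hPA hQB hQ (hP.trans hPA), mul_le_mul hCPQ hCPQ hC (by linarith),
    mul_le_mul hQB hQB hQ (hQ.trans hQB)]

section Conjugation

variable {E : Type*} [NormedAddCommGroup E] [InnerProductSpace ℂ E] (J : E →ₗ⋆[ℂ] E)

noncomputable def spinNorm (x : E) : ℝ :=
  Real.sqrt (‖x‖ ^ 2 + Real.sqrt (‖x‖ ^ 4 - ‖⟪x, J x⟫‖ ^ 2))

theorem spinNorm_nonneg (x : E) : 0 ≤ spinNorm J x := Real.sqrt_nonneg _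

theorem sq_spinNorm (x : E) :
    spinNorm J x ^ 2 = ‖x‖ ^ 2 + Real.sqrt ((‖x‖ ^ 2) ^ 2 - ‖⟪x, J x⟫‖ ^ 2) := by
  rw [spinNorm, Real.sq_sqrt (by positivity), ← pow_mul]

variable {J}

theorem norm_map_of_inner_map_map (hJ : ∀ x y : E, ⟪J x, J y⟫ = ⟪y, x⟫) (x : E) :
    ‖J x‖ = ‖x‖ := by
  rw [norm_eq_sqrt_re_inner (𝕜 := ℂ), norm_eq_sqrt_re_inner (𝕜 := ℂ) x, hJ]

theorem norm_inner_map_self_le (hJ : ∀ x y : E, ⟪J x, J y⟫ = ⟪y, x⟫) (x : E) :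
    ‖⟪x, J x⟫‖ ≤ ‖x‖ ^ 2 :=
  (norm_inner_le_norm x (J x)).trans_eq (by rw [norm_map_of_inner_map_map hJ, sq])

theorem inner_map_comm (hJinv : ∀ x : E, J (J x) = x)
    (hJ : ∀ x y : E, ⟪J x, J y⟫ = ⟪y, x⟫) (x y : E) : ⟪x, J y⟫ = ⟪y, J x⟫ := by
  rw [← hJ (J y) x, hJinv]

theorem inner_add_map_add_of_inner_map_eq_zero (hJinv : ∀ x : E, J (J x) = x)
    (hJ : ∀ x y : E, ⟪J x, J y⟫ = ⟪y, x⟫) {η ξ : E} (h : ⟪η, J ξ⟫ = 0) :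
    ⟪η + ξ, J (η + ξ)⟫ = ⟪η, J η⟫ + ⟪ξ, J ξ⟫ := by
  rw [map_add, inner_add_left, inner_add_right, inner_add_right, inner_map_comm hJinv hJ ξ η, h,
    add_zero, zero_add]

theorem sq_spinNorm_add_sq_norm_le (hJinv : ∀ x : E, J (J x) = x)
    (hJ : ∀ x y : E, ⟪J x, J y⟫ = ⟪y, x⟫) {η ξ : E} (h1 : ⟪η, ξ⟫ = 0) (h2 : ⟪η, J ξ⟫ = 0) :
    spinNorm J η ^ 2 + ‖ξ‖ ^ 2 ≤ spinNorm J (η + ξ) ^ 2 := by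
  have hC : ‖⟪η + ξ, J (η + ξ)⟫‖ ≤ ‖⟪η, J η⟫‖ + ‖⟪ξ, J ξ⟫‖ := by
    rw [inner_add_map_add_of_inner_map_eq_zero hJinv hJ h2]
    exact norm_add_le _ _
  have hroot := Real.sqrt_le_sqrt <| sq_sub_sq_le_add_sq_sub_sq (norm_nonneg _)
    (norm_inner_map_self_le hJ η) (norm_nonneg _) (norm_inner_map_self_le hJ ξ) (norm_nonneg _) hC
  have hsum : ‖η + ξ‖ ^ 2 = ‖η‖ ^ 2 + ‖ξ‖ ^ 2 := by
    rw [@norm_add_sq ℂ, h1, map_zero, mul_zero, add_zero]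
  rw [sq_spinNorm, sq_spinNorm, hsum]
  linarith

end Conjugation

/-- In a complex inner product space `E` with conjugation `J` and associated spin norm
`N`, if `η ⊥ ξ` and `η ⊥ Jξ`, then `N (η + ξ) ≥ N η`, with equality iff `ξ = 0`. -/
theorem spin_norm_increases_on_orthogonal_sum
    {E : Type*} [NormedAddCommGroup E] [InnerProductSpace ℂ E]
    (J : E →ₗ⋆[ℂ] E)
    (hJinv : ∀ x : E, J (J x) = x)
    (hJinner : ∀ x y : E, ⟪J x, J y⟫ = ⟪y, x⟫)
    (N : E → ℝ)
    (hN : ∀ x : E, N x =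
      Real.sqrt (‖x‖ ^ 2 + Real.sqrt (‖x‖ ^ 4 - ‖⟪x, J x⟫‖ ^ 2)))
    (η ξ : E) (h1 : ⟪η, ξ⟫ = 0) (h2 : ⟪η, J ξ⟫ = 0) :
    N η ≤ N (η + ξ) ∧ (N (η + ξ) = N η ↔ ξ = 0) := by
  obtain rfl : N = spinNorm J := funext hN
  have key := sq_spinNorm_add_sq_norm_le hJinv hJinner h1 h2
  refine ⟨?_, fun heq => ?_, fun h => by rw [h, add_zero]⟩
  · exact le_of_pow_le_pow_left₀ two_ne_zero (spinNorm_nonneg J _)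
      ((le_add_of_nonneg_right (sq_nonneg _)).trans key)
  · rw [heq] at key
    simpa using (show ‖ξ‖ ^ 2 ≤ 0 by linarith)
end

section
/- Let n ≥ 1, let H = ℂ² with the Euclidean (Hilbert) norm and orthonormal basis ξ₁ = (1,0), ξ₂ = (0,1), and let X be the ℓ∞-direct sum of n copies of H, i.e., X = {(h₁, …, hₙ) : hᵢ ∈ H} with norm ‖(h₁,…,hₙ)‖ = max_{1 ≤ i ≤ n} ‖hᵢ‖₂. Let V be the two-dimensional subspace of X spanned by e₁ = (ξ₁, …, ξ₁) and e₂ = (ξ₂, …, ξ₂). Then V is a Chebyshev subspace of X: every x ∈ X admits a unique v ∈ V with ‖x − v‖ ≤ ‖x − w‖ for all w ∈ V. -/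
/-!
The span of `e₁` and `e₂` is the diagonal `{(h, …, h) : h ∈ H}`, and the distance from `x` to
`(h, …, h)` is `maxᵢ ‖xᵢ - h‖`. A nearest point exists because the diagonal is closed in a proper
space. If `h₀ ≠ h₁` were two nearest points at distance `r`, then strict convexity of the
Euclidean norm would give `‖xᵢ - (h₀ + h₁) / 2‖ < r` for every `i`, so the midpoint would be
strictly nearer.
-/

open Set Function

def IsChebyshevSet {X : Type*} [SeminormedAddCommGroup X] (s : Set X) : Prop :=
  ∀ x, ∃! v, v ∈ s ∧ ∀ w ∈ s, ‖x - v‖ ≤ ‖x - w‖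

theorem IsClosed.exists_forall_norm_sub_le {X : Type*} [SeminormedAddCommGroup X] [ProperSpace X]
    {s : Set X} (hs : IsClosed s) (hne : s.Nonempty) (x : X) :
    ∃ v ∈ s, ∀ w ∈ s, ‖x - v‖ ≤ ‖x - w‖ := by
  obtain ⟨v, hv, hdist⟩ := hs.exists_infDist_eq_dist hne x
  refine ⟨v, hv, fun w hw => ?_⟩
  simpa only [← dist_eq_norm, ← hdist] using Metric.infDist_le_dist_of_mem hw

theorem isClosed_range_const {ι X : Type*} [Nonempty ι] [TopologicalSpace X] [T2Space X] :
    IsClosed (range (const ι : X → ι → X)) :=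
  LeftInverse.isClosed_range (f := eval (Classical.arbitrary ι)) (fun _ => rfl)
    (continuous_apply _) (continuous_pi fun _ => continuous_id)

section StrictConvex

variable {ι E : Type*} [Fintype ι] [NormedAddCommGroup E] [NormedSpace ℝ E]
  [StrictConvexSpace ℝ E]

theorem eq_of_forall_norm_sub_const_le [Nonempty ι] (x : ι → E) {h₀ h₁ : E}
    (h₀_min : ∀ h, ‖x - const ι h₀‖ ≤ ‖x - const ι h‖)
    (h₁_min : ∀ h, ‖x - const ι h₁‖ ≤ ‖x - const ι h‖) : h₀ = h₁ := by
  by_contra hne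
  set r := ‖x - const ι h₀‖
  have hr₁ : ‖x - const ι h₁‖ = r := le_antisymm (h₁_min h₀) (h₀_min h₁)
  have hmid : ∀ i, ‖x i - ((1 / 2 : ℝ) • h₀ + (1 / 2 : ℝ) • h₁)‖ < r := by
    intro i
    have hle₀ : ‖x i - h₀‖ ≤ r := norm_le_pi_norm (x - const ι h₀) i
    have hle₁ : ‖x i - h₁‖ ≤ r := hr₁ ▸ norm_le_pi_norm (x - const ι h₁) i
    have hlt := norm_combo_lt_of_ne hle₀ hle₁ (fun h => hne (sub_right_injective h))
      one_half_pos one_half_pos (add_halves 1)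
    convert hlt using 2
    module
  have hr : 0 < r := (norm_nonneg _).trans_lt (hmid (Classical.arbitrary ι))
  exact (h₀_min _).not_gt ((pi_norm_lt_iff hr).mpr hmid)

theorem isChebyshevSet_range_const [Nonempty ι] [ProperSpace E] :
    IsChebyshevSet (range (const ι : E → ι → E)) := by
  intro x
  obtain ⟨_, ⟨h₀, rfl⟩, h₀_min⟩ :=
    isClosed_range_const.exists_forall_norm_sub_le (range_nonempty _) x
  refine ⟨const ι h₀, ⟨mem_range_self h₀, h₀_min⟩, ?_⟩
  rintro _ ⟨⟨h₁, rfl⟩, h₁_min⟩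
  exact congrArg (const ι) <| eq_of_forall_norm_sub_const_le x
    (fun h => h₁_min _ (mem_range_self h)) (fun h => h₀_min _ (mem_range_self h))

end StrictConvex

theorem Submodule.coe_span_image_const {ι R M : Type*} [Semiring R] [AddCommMonoid M]
    [Module R M] {s : Set M} (hs : span R s = ⊤) :
    (span R (const ι '' s) : Set (ι → M)) = range (const ι) := by
  have hconst : ⇑(LinearMap.const : M →ₗ[R] ι → M) = const ι := rfl
  rw [← hconst, span_image, hs, map_top, LinearMap.coe_range]

theorem EuclideanSpace.span_single_pair_eq_top (𝕜 : Type*) [RCLike 𝕜] :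
    Submodule.span 𝕜 {EuclideanSpace.single (0 : Fin 2) (1 : 𝕜), EuclideanSpace.single 1 1} =
      ⊤ := by
  refine Submodule.eq_top_iff'.mpr fun h => Submodule.mem_span_pair.mpr ⟨h 0, h 1, ?_⟩
  ext j
  fin_cases j <;> simp

/-- The two-dimensional subspace of the `ℓ∞`-sum of `n` copies of `ℓ²(2)` spanned by the
constant tuples `e₁ = (ξ₁, …, ξ₁)` and `e₂ = (ξ₂, …, ξ₂)` is a Chebyshev subspace. -/
theorem diagonal_hilbert_chebyshev_in_linfty_sum
    (n : ℕ) (hn : 1 ≤ n) :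
    ∀ x : Fin n → EuclideanSpace ℂ (Fin 2),
      ∃! v : Fin n → EuclideanSpace ℂ (Fin 2),
        v ∈ Submodule.span ℂ
          ({fun _ => EuclideanSpace.single (0 : Fin 2) (1 : ℂ),
            fun _ => EuclideanSpace.single (1 : Fin 2) (1 : ℂ)} :
            Set (Fin n → EuclideanSpace ℂ (Fin 2))) ∧
        ∀ w ∈ Submodule.span ℂ
          ({fun _ => EuclideanSpace.single (0 : Fin 2) (1 : ℂ),
            fun _ => EuclideanSpace.single (1 : Fin 2) (1 : ℂ)} :
            Set (Fin n → EuclideanSpace ℂ (Fin 2))),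
          ‖x - v‖ ≤ ‖x - w‖ := by
  have : Nonempty (Fin n) := ⟨⟨0, hn⟩⟩
  have hV := Submodule.coe_span_image_const (ι := Fin n) (EuclideanSpace.span_single_pair_eq_top ℂ)
  rw [image_pair] at hV
  have hcheb : IsChebyshevSet (range (const (Fin n) : EuclideanSpace ℂ (Fin 2) → _)) :=
    isChebyshevSet_range_const
  rwa [← hV] at hcheb
end

section
/- Let n ≥ 1 and consider the space M_{n×2n}(ℂ) of n × 2n complex matrices equipped with the operator norm (the norm as linear operators from ℓ²-ℂ^{2n} to ℓ²-ℂⁿ). Let F be the subspace of all matrices x such that x(i,j) = 0 whenever j ≠ i and j ≠ i + n, and let W be the two-dimensional subspace of F spanned by the matrices A and B defined by A(i,j) = 1 if j = i and 0 otherwise, and B(i,j) = 1 if j = i + n and 0 otherwise. Then W is a Chebyshev subspace of F: every x ∈ F admits a unique w ∈ W with ‖x − w‖ ≤ ‖x − w'‖ for all w' ∈ W. -/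
/-!
Rows of a matrix whose two `n × n` blocks are diagonal are pairwise orthogonal, so `x * xᴴ` is
diagonal and the operator norm of `x` is the largest Euclidean norm of a row, that is, of the pair
`(x i i, x i (i + n)) ∈ ℂ²`. Subtracting `s • A + t • B` shifts each of these `n` points by
`(s, t)`, so best approximations from `span {A, B}` are Chebyshev centres of the points in the
Euclidean plane `ℂ²`. A centre exists by compactness, and it is unique because `ℂ²` is strictly
convex: the midpoint of two distinct centres would be strictly closer to every point.
-/

open Filter Function Matrix
open scoped Matrix.Norms.L2Operator

theorem pi_norm_congr {ι E F : Type*} [Fintype ι] [SeminormedAddCommGroup E]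
    [SeminormedAddCommGroup F] {f : ι → E} {g : ι → F} (h : ∀ i, ‖f i‖ = ‖g i‖) :
    ‖f‖ = ‖g‖ :=
  le_antisymm
    ((pi_norm_le_iff_of_nonneg (norm_nonneg g)).2 fun i => (h i).trans_le (norm_le_pi_norm g i))
    ((pi_norm_le_iff_of_nonneg (norm_nonneg f)).2 fun i =>
      (h i).symm.trans_le (norm_le_pi_norm f i))

theorem RCLike.pi_norm_ofReal_norm_sq {ι E : Type*} (𝕜 : Type*) [RCLike 𝕜] [Fintype ι]
    [SeminormedAddCommGroup E] (r : ι → E) : ‖fun i => ((‖r i‖ ^ 2 : ℝ) : 𝕜)‖ = ‖r‖ ^ 2 := by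
  have hnorm : ∀ i, ‖((‖r i‖ ^ 2 : ℝ) : 𝕜)‖ = ‖r i‖ ^ 2 := fun i => by
    rw [RCLike.norm_ofReal, abs_of_nonneg (by positivity)]
  refine le_antisymm ((pi_norm_le_iff_of_nonneg (by positivity)).2 fun i => ?_) ?_
  · rw [hnorm]
    exact pow_le_pow_left₀ (norm_nonneg _) (norm_le_pi_norm r i) 2
  · rw [← Real.le_sqrt (norm_nonneg _) (norm_nonneg _)]
    refine (pi_norm_le_iff_of_nonneg (Real.sqrt_nonneg _)).2 fun i => ?_
    rw [Real.le_sqrt (norm_nonneg _) (norm_nonneg _), ← hnorm]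
    exact norm_le_pi_norm (fun i => ((‖r i‖ ^ 2 : ℝ) : 𝕜)) i

theorem Matrix.l2_opNorm_eq_norm_rows {𝕜 m n : Type*} [RCLike 𝕜] [Fintype m] [DecidableEq m]
    [Fintype n] [DecidableEq n] (y : Matrix m n 𝕜)
    (h : Pairwise fun i i' => y i ⬝ᵥ star (y i') = 0) :
    ‖y‖ = ‖fun i => WithLp.toLp 2 (y i)‖ := by
  have hdiag : y * yᴴ = diagonal fun i => ((‖WithLp.toLp 2 (y i)‖ ^ 2 : ℝ) : 𝕜) := by
    ext i i'
    rcases eq_or_ne i i' with rfl | hii'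
    · simp [Matrix.mul_apply, EuclideanSpace.norm_sq_eq, RCLike.mul_conj]
    · simpa [Matrix.mul_apply, hii', dotProduct] using h hii'
  have hsq : ‖y‖ ^ 2 = ‖fun i => WithLp.toLp 2 (y i)‖ ^ 2 := by
    rw [sq, ← l2_opNorm_conjTranspose y, ← l2_opNorm_conjTranspose_mul_self,
      conjTranspose_conjTranspose, hdiag, l2_opNorm_diagonal, RCLike.pi_norm_ofReal_norm_sq]
  exact (sq_eq_sq₀ (norm_nonneg _) (norm_nonneg _)).1 hsq

theorem existsUnique_chebyshevCenter {ι E : Type*} [Fintype ι] [Nonempty ι]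
    [NormedAddCommGroup E] [NormedSpace ℝ E] [StrictConvexSpace ℝ E] [ProperSpace E]
    (p : ι → E) : ∃! c : E, ∀ c' : E, dist p (const ι c) ≤ dist p (const ι c') := by
  obtain ⟨i₀⟩ := ‹Nonempty ι›
  have hcont : Continuous fun c : E => dist p (const ι c) :=
    continuous_const.dist (continuous_pi fun _ => continuous_id)
  have hcoercive : Tendsto (fun c : E => dist p (const ι c)) (cocompact E) atTop :=
    tendsto_atTop_mono (fun c => dist_le_pi_dist p (const ι c) i₀)
      (tendsto_dist_left_cocompact_atTop (p i₀))
  obtain ⟨c, hc⟩ := hcont.exists_forall_le hcoercive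
  refine ⟨c, hc, fun c' hc' => by_contra fun hne => ?_⟩
  set r := dist p (const ι c)
  have hmid : ∀ i, dist (p i) (midpoint ℝ c' c) < r := fun i => by
    rw [dist_comm]
    calc dist (midpoint ℝ c' c) (p i) < max (dist c' (p i)) (dist c (p i)) :=
          (sbtw_midpoint_of_ne ℝ hne).dist_lt_max_dist (p i)
      _ ≤ r := by
        rw [dist_comm c', dist_comm c]
        exact max_le ((dist_le_pi_dist p (const ι c') i).trans (hc' c))
          (dist_le_pi_dist p (const ι c) i)
  have hr : 0 < r := dist_nonneg.trans_lt (hmid i₀)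
  exact ((dist_pi_lt_iff hr).2 hmid).not_ge (hc _)

section DiagonalBlocks

variable (𝕜 : Type*) [RCLike 𝕜] (n : ℕ)

def diagonalBlocks : Submodule 𝕜 (Matrix (Fin n) (Fin (2 * n)) 𝕜) where
  carrier := {x | ∀ (i : Fin n) (j : Fin (2 * n)), (j : ℕ) ≠ i → (j : ℕ) ≠ i + n → x i j = 0}
  add_mem' hx hy i j h₁ h₂ := by simp [hx i j h₁ h₂, hy i j h₁ h₂]
  zero_mem' _ _ _ _ := rfl
  smul_mem' c x hx i j h₁ h₂ := by simp [hx i j h₁ h₂]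

def identityLeft : Matrix (Fin n) (Fin (2 * n)) 𝕜 := of fun i j => if (j : ℕ) = i then 1 else 0

def identityRight : Matrix (Fin n) (Fin (2 * n)) 𝕜 := of fun i j => if (j : ℕ) = i + n then 1 else 0

theorem span_identityLeft_identityRight_le :
    Submodule.span 𝕜 {identityLeft 𝕜 n, identityRight 𝕜 n} ≤ diagonalBlocks 𝕜 n := by
  refine Submodule.span_le.2 (Set.insert_subset_iff.2 ⟨?_, Set.singleton_subset_iff.2 ?_⟩) <;>
    intro i j h₁ h₂ <;> simp [identityLeft, identityRight, h₁, h₂]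

variable {𝕜 n}

def blockDiagonals (x : Matrix (Fin n) (Fin (2 * n)) 𝕜) : Fin n → EuclideanSpace 𝕜 (Fin 2) :=
  fun i => !₂[x i ⟨i, by omega⟩, x i ⟨i + n, by omega⟩]

theorem blockDiagonals_sub_smul_add_smul (x : Matrix (Fin n) (Fin (2 * n)) 𝕜)
    (c : EuclideanSpace 𝕜 (Fin 2)) :
    blockDiagonals (x - (c 0 • identityLeft 𝕜 n + c 1 • identityRight 𝕜 n)) =
      blockDiagonals x - const (Fin n) c := by
  ext i k
  fin_cases k <;> simp [blockDiagonals, identityLeft, identityRight, (Fin.pos i).ne']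

theorem norm_eq_norm_blockDiagonals {x : Matrix (Fin n) (Fin (2 * n)) 𝕜}
    (hx : x ∈ diagonalBlocks 𝕜 n) : ‖x‖ = ‖blockDiagonals x‖ := by
  have hrows : Pairwise fun i i' => x i ⬝ᵥ star (x i') = 0 := fun i i' hii' => by
    have hval : (i : ℕ) ≠ i' := Fin.val_injective.ne hii'
    refine Finset.sum_eq_zero fun j _ => ?_
    by_cases hj : (j : ℕ) = i ∨ (j : ℕ) = i + n
    · simp [hx i' j (by omega) (by omega)]
    · simp [hx i j (by omega) (by omega)]
  have hrow_norm : ∀ i, ‖WithLp.toLp 2 (x i)‖ = ‖blockDiagonals x i‖ := fun i => by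
    rw [← sq_eq_sq₀ (norm_nonneg _) (norm_nonneg _), EuclideanSpace.norm_sq_eq,
      EuclideanSpace.norm_sq_eq, Fin.sum_univ_two,
      Fintype.sum_eq_add (⟨i, by omega⟩ : Fin (2 * n)) ⟨i + n, by omega⟩
        (by simp [Fin.ext_iff, (Fin.pos i).ne'])]
    · simp [blockDiagonals]
    · rintro j ⟨h₁, h₂⟩
      simp [hx i j (fun h => h₁ (Fin.ext h)) (fun h => h₂ (Fin.ext h))]
  rw [l2_opNorm_eq_norm_rows x hrows]
  exact pi_norm_congr hrow_norm

end DiagonalBlocks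

/-- In the space of `n × 2n` complex matrices with the `ℓ²`-operator norm, consider the
subspace `F` of matrices supported on positions `(i, i)` and `(i, i + n)`, and its
two-dimensional subspace `W` spanned by `A` (ones on the `(i,i)` positions) and `B`
(ones on the `(i, i+n)` positions). Then `W` is a Chebyshev subspace of `F`. -/
theorem two_dim_chebyshev_in_rank_n_matrix_triple
    (n : ℕ) (hn : 1 ≤ n)
    (opNorm : Matrix (Fin n) (Fin (2 * n)) ℂ → ℝ)
    (hopNorm : ∀ x : Matrix (Fin n) (Fin (2 * n)) ℂ,
      opNorm x = ‖LinearMap.toContinuousLinearMap (Matrix.toEuclideanLin x)‖)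
    (A B : Matrix (Fin n) (Fin (2 * n)) ℂ)
    (hA : ∀ (i : Fin n) (j : Fin (2 * n)),
      A i j = if (j : ℕ) = (i : ℕ) then 1 else 0)
    (hB : ∀ (i : Fin n) (j : Fin (2 * n)),
      B i j = if (j : ℕ) = (i : ℕ) + n then 1 else 0) :
    ∀ x : Matrix (Fin n) (Fin (2 * n)) ℂ,
      (∀ (i : Fin n) (j : Fin (2 * n)),
        (j : ℕ) ≠ (i : ℕ) → (j : ℕ) ≠ (i : ℕ) + n → x i j = 0) →
      ∃! w : Matrix (Fin n) (Fin (2 * n)) ℂ,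
        w ∈ Submodule.span ℂ ({A, B} : Set (Matrix (Fin n) (Fin (2 * n)) ℂ)) ∧
        ∀ w' ∈ Submodule.span ℂ ({A, B} : Set (Matrix (Fin n) (Fin (2 * n)) ℂ)),
          opNorm (x - w) ≤ opNorm (x - w') := by
  intro x hx
  have : Nonempty (Fin n) := ⟨⟨0, hn⟩⟩
  obtain rfl : A = identityLeft ℂ n := Matrix.ext hA
  obtain rfl : B = identityRight ℂ n := Matrix.ext hB
  set L : EuclideanSpace ℂ (Fin 2) → Matrix (Fin n) (Fin (2 * n)) ℂ :=
    fun c => c 0 • identityLeft ℂ n + c 1 • identityRight ℂ n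
  have hL_mem : ∀ c, L c ∈ Submodule.span ℂ {identityLeft ℂ n, identityRight ℂ n} :=
    fun c => Submodule.mem_span_pair.2 ⟨c 0, c 1, rfl⟩
  have hL_surj : ∀ w ∈ Submodule.span ℂ {identityLeft ℂ n, identityRight ℂ n}, ∃ c, L c = w := by
    intro w hw
    obtain ⟨s, t, rfl⟩ := Submodule.mem_span_pair.1 hw
    exact ⟨!₂[s, t], by simp [L]⟩
  have hdist : ∀ c, opNorm (x - L c) = dist (blockDiagonals x) (const (Fin n) c) := fun c => by
    have hmem : x - L c ∈ diagonalBlocks ℂ n :=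
      sub_mem hx (span_identityLeft_identityRight_le ℂ n (hL_mem c))
    rw [hopNorm, dist_eq_norm, ← blockDiagonals_sub_smul_add_smul,
      ← norm_eq_norm_blockDiagonals hmem]
    rfl
  obtain ⟨c, hc, hc_unique⟩ := existsUnique_chebyshevCenter (blockDiagonals x)
  refine ⟨L c, ⟨hL_mem c, fun w hw => ?_⟩, fun w ⟨hw, hw_min⟩ => ?_⟩
  · obtain ⟨c', rfl⟩ := hL_surj w hw
    simpa only [hdist] using hc c'
  · obtain ⟨c', rfl⟩ := hL_surj w hw
    rw [hc_unique c' fun c'' => by simpa only [hdist] using hw_min _ (hL_mem c'')]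
end

section
/- Let H be a non-separable complex Hilbert space and let K(H) denote the Banach space of compact linear operators on H with the operator norm. Then K(H) has no non-zero finite-dimensional Chebyshev subspaces: for every finite-dimensional subspace V of K(H) with V ≠ {0}, there exists a compact operator T on H which does not have a unique best approximation in V. -/
/-!
Compact operators have separable range, so the ranges of all operators in the finite-dimensional
space `V`, together with the range of `S₀†` for some `S₀ ≠ 0` in `V`, lie in a separable set.
As `H` is not separable, some unit vector `e` is orthogonal to that set: `e ⊥ range S` for every
`S ∈ V`, and `S₀ e = 0`. For the rank-one projection `P = ⟪e, ·⟫ e`, every `S ∈ V` satisfies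
`‖P - S‖ ≥ ‖⟪e, (P - S) e⟫‖ = 1`, while Pythagoras applied to `x = ⟪e, x⟫ e + y` shows that
both `0` and `S₀ / ‖S₀‖` are at distance exactly `1` from `P`.
-/

open TopologicalSpace Set InnerProductSpace ContinuousLinearMap

theorem IsCompactOperator.isSeparable_range {𝕜 E F : Type*} [NontriviallyNormedField 𝕜]
    [SeminormedAddCommGroup E] [NormedSpace 𝕜 E] [SeminormedAddCommGroup F] [NormedSpace 𝕜 F]
    {f : E →ₗ[𝕜] F} (hf : IsCompactOperator f) : IsSeparable (range f) := by
  rw [← image_univ, ← Metric.iUnion_closedBall_nat 0, image_iUnion]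
  refine .iUnion fun n => ?_
  obtain ⟨K, hK, hfK⟩ := hf.image_closedBall_subset_compact (n : ℝ)
  exact hK.isSeparable.mono hfK

theorem Submodule.isSeparable_iUnion_range {R M N : Type*} [CommSemiring R] [TopologicalSpace R]
    [SeparableSpace R] [AddCommMonoid M] [Module R M] [TopologicalSpace M] [AddCommMonoid N]
    [Module R N] [TopologicalSpace N] [ContinuousAdd N] [ContinuousSMul R N]
    (V : Submodule R (M →L[R] N)) [Module.Finite R V] (hV : ∀ f ∈ V, IsSeparable (range f)) :
    IsSeparable (⋃ f ∈ V, range f) := by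
  obtain ⟨s, rfl⟩ : V.FG := Module.Finite.iff_fg.mp ‹_›
  refine (IsSeparable.span (R := R) (.iUnion fun f : s => hV f (subset_span f.2))).mono
    (iUnion₂_subset fun f hf => ?_)
  rintro _ ⟨x, rfl⟩
  induction hf using Submodule.span_induction with
  | mem g hg => exact subset_span (mem_iUnion.2 ⟨⟨g, hg⟩, mem_range_self x⟩)
  | zero => exact zero_mem _
  | add g h _ _ hg hh => exact add_mem hg hh
  | smul c g _ hg => exact Submodule.smul_mem _ c hg

section Hilbert

variable {𝕜 E F : Type*} [RCLike 𝕜] [NormedAddCommGroup E] [InnerProductSpace 𝕜 E]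
  [CompleteSpace E] [NormedAddCommGroup F] [InnerProductSpace 𝕜 F] [CompleteSpace F]

theorem ContinuousLinearMap.isSeparable_range_adjoint {T : E →L[𝕜] F}
    (hT : IsSeparable (range T)) : IsSeparable (range (adjoint T)) := by
  set K := T.range.topologicalClosure
  refine (hT.closure.image (adjoint T).continuous).mono ?_
  rintro _ ⟨y, rfl⟩
  obtain ⟨k, hk, w, hw, rfl⟩ := K.exists_add_mem_mem_orthogonal y
  have hw : w ∈ (adjoint T).ker := by
    rw [← orthogonal_range]
    exact Submodule.orthogonal_le (Submodule.le_topologicalClosure _) hw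
  exact ⟨k, hk, by rw [map_add, show adjoint T w = 0 from hw, add_zero]⟩

theorem exists_norm_eq_one_forall_inner_eq_zero (hE : ¬ SeparableSpace E) {s : Set E}
    (hs : IsSeparable s) : ∃ e : E, ‖e‖ = 1 ∧ ∀ x ∈ s, inner 𝕜 e x = 0 := by
  set K := (Submodule.span 𝕜 s).topologicalClosure
  have hK : K ≠ ⊤ := by
    intro hK
    apply hE
    rw [← isSeparable_univ_iff, ← Submodule.top_coe (R := 𝕜), ← hK,
      Submodule.topologicalClosure_coe]
    exact hs.span.closure
  obtain ⟨v, hv, hv0⟩ := Submodule.exists_mem_ne_zero_of_ne_bot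
    (mt Submodule.orthogonal_eq_bot_iff.mp hK)
  refine ⟨(‖v‖⁻¹ : 𝕜) • v, norm_smul_inv_norm hv0, fun x hx => ?_⟩
  exact (Submodule.mem_orthogonal' K _).mp (Kᗮ.smul_mem _ hv) x
    (Submodule.le_topologicalClosure _ (Submodule.subset_span hx))

end Hilbert

theorem InnerProductSpace.isCompactOperator_rankOne {𝕜 E F : Type*} [RCLike 𝕜]
    [SeminormedAddCommGroup E] [InnerProductSpace 𝕜 E] [SeminormedAddCommGroup F]
    [InnerProductSpace 𝕜 F] (x : E) (y : F) : IsCompactOperator (rankOne 𝕜 x y) :=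
  (isCompactOperator_of_locallyCompactSpace_rng (toSpanSingleton 𝕜 x)).comp_clm (innerSL 𝕜 y)

section RankOneSelf

variable {𝕜 E : Type*} [RCLike 𝕜] [NormedAddCommGroup E] [InnerProductSpace 𝕜 E]
  {e : E} {S : E →L[𝕜] E}

theorem one_le_norm_rankOne_self_sub (he : ‖e‖ = 1) (hS : ∀ x, inner 𝕜 e (S x) = 0) :
    1 ≤ ‖rankOne 𝕜 e e - S‖ := by
  have h : inner 𝕜 e ((rankOne 𝕜 e e - S) e) = 1 := by
    simp [inner_sub_right, hS, inner_self_eq_norm_sq_to_K, he]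
  calc 1 = ‖inner 𝕜 e ((rankOne 𝕜 e e - S) e)‖ := by rw [h, norm_one]
    _ ≤ ‖e‖ * ‖(rankOne 𝕜 e e - S) e‖ := norm_inner_le_norm _ _
    _ ≤ ‖rankOne 𝕜 e e - S‖ := by simpa [he] using (rankOne 𝕜 e e - S).le_opNorm e

theorem norm_rankOne_self_sub_le_one (he : ‖e‖ = 1) (hS : ∀ x, inner 𝕜 e (S x) = 0)
    (hSe : S e = 0) (hS₁ : ‖S‖ ≤ 1) : ‖rankOne 𝕜 e e - S‖ ≤ 1 := by
  have hee : inner 𝕜 e e = 1 := by simp [inner_self_eq_norm_sq_to_K, he]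
  refine opNorm_le_bound _ zero_le_one fun x => ?_
  set a := inner 𝕜 e x
  set y := x - a • e
  have hy : inner 𝕜 (a • e) y = 0 := by
    rw [inner_smul_left, inner_sub_right, inner_smul_right, hee, mul_one, sub_self, mul_zero]
  have hSy : inner 𝕜 (a • e) (-S y) = 0 := by
    rw [inner_neg_right, inner_smul_left, hS, mul_zero, neg_zero]
  have happ : (rankOne 𝕜 e e - S) x = a • e + -S y := by
    simp [y, hSe, sub_eq_add_neg, a]
  have hx : ‖x‖ * ‖x‖ = ‖a • e‖ * ‖a • e‖ + ‖y‖ * ‖y‖ := by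
    rw [← norm_add_sq_eq_norm_sq_add_norm_sq_of_inner_eq_zero _ _ hy, add_sub_cancel]
  have hSy_le : ‖S y‖ ≤ ‖y‖ := (S.le_opNorm y).trans (mul_le_of_le_one_left (norm_nonneg _) hS₁)
  have hsq : ‖(rankOne 𝕜 e e - S) x‖ * ‖(rankOne 𝕜 e e - S) x‖ ≤ ‖x‖ * ‖x‖ := by
    rw [happ, norm_add_sq_eq_norm_sq_add_norm_sq_of_inner_eq_zero _ _ hSy, norm_neg, hx]
    gcongr
  rw [one_mul]
  exact (mul_self_le_mul_self_iff (norm_nonneg _) (norm_nonneg _)).mpr hsq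

end RankOneSelf

/-- (Legg–Scranton–Ward) If `H` is a non-separable complex Hilbert space, then `K(H)` has
no non-zero finite-dimensional Chebyshev subspaces. -/
theorem no_finite_dim_chebyshev_in_compacts_of_nonseparable
    {H : Type*} [NormedAddCommGroup H] [InnerProductSpace ℂ H] [CompleteSpace H]
    (hH : ¬ SeparableSpace H)
    (V : Submodule ℂ (H →L[ℂ] H))
    (hVcompact : (V : Set (H →L[ℂ] H)) ⊆ {T : H →L[ℂ] H | IsCompactOperator T})
    [FiniteDimensional ℂ V] (hV : V ≠ ⊥) :
    ∃ T : H →L[ℂ] H, IsCompactOperator T ∧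
      ¬ ∃! S : H →L[ℂ] H, S ∈ V ∧ ∀ S' ∈ V, ‖T - S‖ ≤ ‖T - S'‖ := by
  obtain ⟨S₀, hS₀V, hS₀⟩ := Submodule.exists_mem_ne_zero_of_ne_bot hV
  have hsep : IsSeparable (⋃ S ∈ V, range S) :=
    V.isSeparable_iUnion_range fun S hS => IsCompactOperator.isSeparable_range (hVcompact hS)
  obtain ⟨e, he, he_perp⟩ := exists_norm_eq_one_forall_inner_eq_zero (𝕜 := ℂ) hH
    (hsep.union (isSeparable_range_adjoint (hVcompact hS₀V).isSeparable_range))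
  have hVe : ∀ S ∈ V, ∀ x, inner ℂ e (S x) = 0 := fun S hS x =>
    he_perp _ (.inl (mem_biUnion hS (mem_range_self x)))
  have hS₀e : S₀ e = 0 := inner_self_eq_zero (𝕜 := ℂ) |>.mp <| by
    rw [← adjoint_inner_right]; exact he_perp _ (.inr (mem_range_self _))
  have hbest : ∀ S ∈ V, ‖S‖ ≤ 1 → S e = 0 →
      S ∈ V ∧ ∀ S' ∈ V, ‖rankOne ℂ e e - S‖ ≤ ‖rankOne ℂ e e - S'‖ := fun S hS hS₁ hSe =>
    ⟨hS, fun S' hS' => (norm_rankOne_self_sub_le_one he (hVe S hS) hSe hS₁).trans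
      (one_le_norm_rankOne_self_sub he (hVe S' hS'))⟩
  refine ⟨rankOne ℂ e e, isCompactOperator_rankOne e e, fun ⟨S, _, huniq⟩ => ?_⟩
  have h₀ := huniq 0 (hbest 0 V.zero_mem (by simp) rfl)
  have h₁ := huniq ((‖S₀‖⁻¹ : ℂ) • S₀) (hbest _ (V.smul_mem _ hS₀V)
    (norm_smul_inv_norm hS₀).le (by rw [smul_apply, hS₀e, smul_zero]))
  exact smul_ne_zero (by simpa using hS₀) hS₀ (h₁.trans h₀.symm)
end
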